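/- Let L be an e-cyclic residuated lattice and let P ≠ L be a prime convex subalgebra of L. Then the following are equivalent: (1) P is a minimal prime convex subalgebra of L; (2) for all x ∈ L, x ∈ P implies x^⊥ ⊈ P; (3) P = ⋃{x^⊥ : x ∈ L \ P}. -/

import Mathlib

universe u

/-- A residuated lattice: a lattice-ordered monoid with left and right residuals.
`ldiv x z` is `x \ z` and `rdiv z y` is `z / y`. -/
class ResiduatedLattice (α : Type u) extends Lattice α, Monoid α where
  ldiv : α → α → α
  rdiv : α → α → α
  mul_le_iff_le_ldiv : ∀ x y z : α, x * y ≤ z ↔ y ≤ ldiv x z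
  mul_le_iff_le_rdiv : ∀ x y z : α, x * y ≤ z ↔ x ≤ rdiv z y

namespace ResiduatedLattice

variable {α : Type u} [ResiduatedLattice α]

/-- `L` is e-cyclic if `x \ e = e / x` for all `x`. -/
def ECyclic (α : Type u) [ResiduatedLattice α] : Prop :=
  ∀ x : α, ldiv x 1 = rdiv 1 x

/-- Absolute value: `|x| = x ⊓ (e / x) ⊓ e`. -/
def absv (x : α) : α := x ⊓ rdiv 1 x ⊓ 1

/-- A convex subalgebra: contains `e`, closed under all the operations, and order-convex. -/
structure IsConvexSubalgebra (H : Set α) : Prop where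
  one_mem : (1 : α) ∈ H
  mul_mem : ∀ ⦃x⦄, x ∈ H → ∀ ⦃y⦄, y ∈ H → x * y ∈ H
  sup_mem : ∀ ⦃x⦄, x ∈ H → ∀ ⦃y⦄, y ∈ H → x ⊔ y ∈ H
  inf_mem : ∀ ⦃x⦄, x ∈ H → ∀ ⦃y⦄, y ∈ H → x ⊓ y ∈ H
  ldiv_mem : ∀ ⦃x⦄, x ∈ H → ∀ ⦃y⦄, y ∈ H → ldiv x y ∈ H
  rdiv_mem : ∀ ⦃x⦄, x ∈ H → ∀ ⦃y⦄, y ∈ H → rdiv x y ∈ H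
  convex : ∀ ⦃a⦄, a ∈ H → ∀ ⦃b⦄, b ∈ H → ∀ ⦃x⦄, a ≤ x → x ≤ b → x ∈ H

/-- `C[S]`: the smallest convex subalgebra containing `S`. -/
def convexClosure (S : Set α) : Set α :=
  ⋂₀ {H : Set α | IsConvexSubalgebra H ∧ S ⊆ H}

end ResiduatedLattice

open ResiduatedLattice

/-- A prime convex subalgebra: a convex subalgebra that is meet-irreducible in the
lattice of convex subalgebras. -/
def IsPrimeConvex {α : Type u} [ResiduatedLattice α] (H : Set α) : Prop :=
  IsConvexSubalgebra H ∧
  ∀ X Y : Set α, IsConvexSubalgebra X → IsConvexSubalgebra Y →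
    X ∩ Y ⊆ H → X ⊆ H ∨ Y ⊆ H

/-- A minimal prime convex subalgebra. -/
def IsMinimalPrimeConvex {α : Type u} [ResiduatedLattice α] (P : Set α) : Prop :=
  IsPrimeConvex P ∧ P ≠ Set.univ ∧
  ∀ Q : Set α, IsPrimeConvex Q → Q ≠ Set.univ → Q ⊆ P → Q = P

/-- The polar `S^⊥ = {a : |a| ⊔ |s| = e for all s ∈ S}`. -/
def polar {α : Type u} [ResiduatedLattice α] (S : Set α) : Set α :=
  {a : α | ∀ s ∈ S, absv a ⊔ absv s = 1}

/-!
If `x ∈ P` and `x^⊥ ⊆ P`, the lattice ideal generated by `|x|` and by the elements `t ≤ e`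
outside `P` does not contain `e`: from `e ≤ |x| ⊔ t` one gets `t ∈ x^⊥ ⊆ P`. A convex subalgebra
maximal among those missing this ideal (Zorn) is prime, lies inside `P` and does not contain `x`,
so `P` is not minimal. The remaining implications rest on `y^⊥ ⊆ P` for every prime `P` and
`y ∉ P`, which holds because `y^⊥` meets the convex subalgebra generated by `y` only in `e`.
-/

namespace ResiduatedLattice

variable {α : Type u} [ResiduatedLattice α]

theorem mul_ldiv_le (a b : α) : a * ldiv a b ≤ b := (mul_le_iff_le_ldiv _ _ _).2 le_rfl

theorem rdiv_mul_le (b a : α) : rdiv b a * a ≤ b := (mul_le_iff_le_rdiv _ _ _).2 le_rfl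

instance : MulLeftMono α :=
  ⟨fun _ _ _ h => (mul_le_iff_le_ldiv _ _ _).2 (h.trans ((mul_le_iff_le_ldiv _ _ _).1 le_rfl))⟩

instance : MulRightMono α :=
  ⟨fun _ _ _ h => (mul_le_iff_le_rdiv _ _ _).2 (h.trans ((mul_le_iff_le_rdiv _ _ _).1 le_rfl))⟩

protected theorem mul_sup (a b c : α) : a * (b ⊔ c) = a * b ⊔ a * c :=
  le_antisymm
    ((mul_le_iff_le_ldiv _ _ _).2 <| sup_le ((mul_le_iff_le_ldiv _ _ _).1 le_sup_left)
      ((mul_le_iff_le_ldiv _ _ _).1 le_sup_right))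
    (sup_le (mul_le_mul_right le_sup_left a) (mul_le_mul_right le_sup_right a))

protected theorem sup_mul (a b c : α) : (b ⊔ c) * a = b * a ⊔ c * a :=
  le_antisymm
    ((mul_le_iff_le_rdiv _ _ _).2 <| sup_le ((mul_le_iff_le_rdiv _ _ _).1 le_sup_left)
      ((mul_le_iff_le_rdiv _ _ _).1 le_sup_right))
    (sup_le (mul_le_mul_left le_sup_left a) (mul_le_mul_left le_sup_right a))

theorem sup_pow_add_le {u v : α} (hu : u ≤ 1) (hv : v ≤ 1) :
    ∀ m n : ℕ, (u ⊔ v) ^ (m + n) ≤ u ^ m ⊔ v ^ n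
  | 0, n => le_sup_of_le_left (by simpa using pow_le_one' (sup_le hu hv) n)
  | m, 0 => le_sup_of_le_right (by simpa using pow_le_one' (sup_le hu hv) m)
  | m + 1, n + 1 => by
    have ih₁ := sup_pow_add_le hu hv m (n + 1)
    have ih₂ : (u ⊔ v) ^ (m + (n + 1)) ≤ u ^ (m + 1) ⊔ v ^ n := by
      convert sup_pow_add_le hu hv (m + 1) n using 2; omega
    calc (u ⊔ v) ^ (m + 1 + (n + 1))
        = u * (u ⊔ v) ^ (m + (n + 1)) ⊔ v * (u ⊔ v) ^ (m + (n + 1)) := by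
          rw [show m + 1 + (n + 1) = m + (n + 1) + 1 by omega, pow_succ', ResiduatedLattice.sup_mul]
      _ ≤ u * (u ^ m ⊔ v ^ (n + 1)) ⊔ v * (u ^ (m + 1) ⊔ v ^ n) :=
          sup_le_sup (mul_le_mul_right ih₁ u) (mul_le_mul_right ih₂ v)
      _ ≤ u ^ (m + 1) ⊔ v ^ (n + 1) := by
          rw [ResiduatedLattice.mul_sup, ResiduatedLattice.mul_sup, ← pow_succ', ← pow_succ']
          exact sup_le (sup_le_sup_left (mul_le_of_le_one_left' hu) _)
            (sup_le_sup_right (mul_le_of_le_one_left' hv) _)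

theorem mul_sup_eq_one_of_sup_eq_one {a b c : α} (ha : a ⊔ c = 1) (hb : b ⊔ c = 1) :
    a * b ⊔ c = 1 := by
  have ha₁ : a ≤ 1 := ha ▸ le_sup_left
  have hb₁ : b ≤ 1 := hb ▸ le_sup_left
  have hc₁ : c ≤ 1 := ha ▸ le_sup_right
  refine le_antisymm (sup_le (mul_le_one' ha₁ hb₁) hc₁) ?_
  calc (1 : α) = (a ⊔ c) * (b ⊔ c) := by rw [ha, hb, one_mul]
    _ = a * b ⊔ a * c ⊔ (c * b ⊔ c * c) := by
        rw [ResiduatedLattice.sup_mul, ResiduatedLattice.mul_sup, ResiduatedLattice.mul_sup]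
    _ ≤ a * b ⊔ c :=
        sup_le (sup_le_sup_left (mul_le_of_le_one_left' ha₁) _)
          (le_sup_of_le_right (sup_le (mul_le_of_le_one_right' hb₁) (mul_le_of_le_one_right' hc₁)))

theorem absv_le_self (a : α) : absv a ≤ a := inf_le_left.trans inf_le_left

theorem absv_le_one (a : α) : absv a ≤ 1 := inf_le_right

theorem absv_mul_self_le_one (a : α) : absv a * a ≤ 1 :=
  (mul_le_iff_le_rdiv _ _ _).2 (inf_le_left.trans inf_le_right)

theorem self_mul_absv_le_one (hec : ECyclic α) (a : α) : a * absv a ≤ 1 :=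
  (mul_le_iff_le_ldiv _ _ _).2 (hec a ▸ inf_le_left.trans inf_le_right)

theorem le_absv {u a : α} (h : u ≤ a) (h' : u * a ≤ 1) (h₁ : u ≤ 1) : u ≤ absv a :=
  le_inf (le_inf h ((mul_le_iff_le_rdiv _ _ _).1 h')) h₁

theorem absv_one : absv (1 : α) = 1 :=
  le_antisymm (absv_le_one 1) (le_absv le_rfl (mul_one 1).le le_rfl)

theorem eq_one_of_absv_eq_one {a : α} (h : absv a = 1) : a = 1 := by
  have h₁ := absv_mul_self_le_one a
  rw [h, one_mul] at h₁
  exact le_antisymm h₁ (h ▸ absv_le_self a)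

theorem sq_le_absv {a : α} (ha : a ≤ 1) : a ^ 2 ≤ absv a := by
  rw [sq]
  exact le_absv (mul_le_of_le_one_left' ha) (mul_le_one' (mul_le_one' ha ha) ha) (mul_le_one' ha ha)

theorem absv_mul_absv_mul_absv_le_absv_mul (a b : α) :
    absv a * absv b * absv a ≤ absv (a * b) := by
  refine le_absv ?_ ?_ (mul_le_one' (mul_le_one' (absv_le_one a) (absv_le_one b)) (absv_le_one a))
  · simpa using mul_le_mul' (mul_le_mul' (absv_le_self a) (absv_le_self b)) (absv_le_one a)
  · calc absv a * absv b * absv a * (a * b) = absv a * (absv b * ((absv a * a) * b)) := by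
          simp only [mul_assoc]
      _ ≤ absv a * (absv b * b) :=
          mul_le_mul_right (mul_le_mul_right (mul_le_of_le_one_left' (absv_mul_self_le_one a)) _) _
      _ ≤ 1 := mul_le_one' (absv_le_one a) (absv_mul_self_le_one b)

theorem absv_mul_absv_mul_absv_le_absv_ldiv (hec : ECyclic α) (a b : α) :
    absv a * absv b * absv a ≤ absv (ldiv a b) := by
  refine le_absv ?_ ?_ (mul_le_one' (mul_le_one' (absv_le_one a) (absv_le_one b)) (absv_le_one a))
  · refine (mul_le_iff_le_ldiv _ _ _).1 ?_
    calc a * (absv a * absv b * absv a) = (a * absv a) * (absv b * absv a) := by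
          simp only [mul_assoc]
      _ ≤ b := by
          simpa using mul_le_mul' (self_mul_absv_le_one hec a)
            (mul_le_mul' (absv_le_self b) (absv_le_one a))
  · calc absv a * absv b * absv a * ldiv a b = absv a * (absv b * (absv a * ldiv a b)) := by
          simp only [mul_assoc]
      _ ≤ absv a * (absv b * b) := by
          gcongr
          exact (mul_le_mul_left (absv_le_self a) _).trans (mul_ldiv_le a b)
      _ ≤ 1 := mul_le_one' (absv_le_one a) (absv_mul_self_le_one b)

theorem absv_mul_absv_mul_absv_le_absv_rdiv (hec : ECyclic α) (a b : α) :
    absv a * absv b * absv a ≤ absv (rdiv b a) := by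
  refine le_absv ?_ ?_ (mul_le_one' (mul_le_one' (absv_le_one a) (absv_le_one b)) (absv_le_one a))
  · refine (mul_le_iff_le_rdiv _ _ _).1 ?_
    rw [mul_assoc]
    exact mul_le_of_le_one_right' (absv_mul_self_le_one a) |>.trans
      (mul_le_of_le_one_left' (absv_le_one a) |>.trans (absv_le_self b))
  · have h : absv b * rdiv b a ≤ ldiv a 1 := by
      rw [hec a, ← mul_le_iff_le_rdiv, mul_assoc]
      exact (mul_le_mul_right (rdiv_mul_le b a) _).trans
        (absv_mul_self_le_one b)
    calc absv a * absv b * absv a * rdiv b a = absv a * (absv b * (absv a * rdiv b a)) := by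
          simp only [mul_assoc]
      _ ≤ a * ldiv a 1 := by
          gcongr
          · exact absv_le_self a
          · exact (mul_le_mul_right (mul_le_of_le_one_left' (absv_le_one a)) _).trans h
      _ ≤ 1 := mul_ldiv_le a 1

theorem absv_mul_absv_le_absv_sup (a b : α) : absv a * absv b ≤ absv (a ⊔ b) := by
  refine le_absv ((mul_le_of_le_one_right' (absv_le_one b)).trans
    ((absv_le_self a).trans le_sup_left)) ?_ (mul_le_one' (absv_le_one a) (absv_le_one b))
  rw [ResiduatedLattice.mul_sup, mul_assoc, mul_assoc]
  refine sup_le ?_ (mul_le_one' (absv_le_one a) (absv_mul_self_le_one b))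
  exact (mul_le_mul_right (mul_le_of_le_one_left' (absv_le_one b)) _).trans
    (absv_mul_self_le_one a)

theorem absv_mul_absv_le_absv_inf (a b : α) : absv a * absv b ≤ absv (a ⊓ b) := by
  refine le_absv (le_inf ?_ ?_) ?_ (mul_le_one' (absv_le_one a) (absv_le_one b))
  · exact (mul_le_of_le_one_right' (absv_le_one b)).trans (absv_le_self a)
  · exact (mul_le_of_le_one_left' (absv_le_one a)).trans (absv_le_self b)
  · rw [mul_assoc]
    exact mul_le_one' (absv_le_one a)
      ((mul_le_mul_right inf_le_right _).trans (absv_mul_self_le_one b))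

theorem absv_mul_absv_le_absv_of_le_of_le {a b z : α} (ha : a ≤ z) (hb : z ≤ b) :
    absv a * absv b ≤ absv z := by
  refine le_absv ?_ ?_ (mul_le_one' (absv_le_one a) (absv_le_one b))
  · exact (mul_le_of_le_one_right' (absv_le_one b)).trans ((absv_le_self a).trans ha)
  · rw [mul_assoc]
    exact mul_le_one' (absv_le_one a)
      ((mul_le_mul_right hb _).trans (absv_mul_self_le_one b))

namespace IsConvexSubalgebra

variable {H : Set α}

theorem absv_mem (hH : IsConvexSubalgebra H) {z : α} (hz : z ∈ H) : absv z ∈ H :=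
  hH.inf_mem (hH.inf_mem hz (hH.rdiv_mem hH.one_mem hz)) hH.one_mem

theorem mem_of_absv_mem (hH : IsConvexSubalgebra H) {z : α} (hz : absv z ∈ H) : z ∈ H :=
  hH.convex hz (hH.ldiv_mem hz hH.one_mem) (absv_le_self z)
    ((mul_le_iff_le_ldiv _ _ _).1 (absv_mul_self_le_one z))

theorem pow_mem (hH : IsConvexSubalgebra H) {z : α} (hz : z ∈ H) (n : ℕ) : z ^ n ∈ H := by
  induction n with
  | zero => simpa using hH.one_mem
  | succ n ih => simpa [pow_succ] using hH.mul_mem ih hz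

theorem mem_of_le_of_le_one (hH : IsConvexSubalgebra H) {a z : α} (ha : a ∈ H) (haz : a ≤ z)
    (hz : z ≤ 1) : z ∈ H :=
  hH.convex ha hH.one_mem haz hz

theorem mem_of_absv_mul_absv_mul_absv_le (hH : IsConvexSubalgebra H) {a b z : α} (ha : a ∈ H)
    (hb : b ∈ H) (h : absv a * absv b * absv a ≤ absv z) : z ∈ H :=
  hH.mem_of_absv_mem <| hH.mem_of_le_of_le_one
    (hH.mul_mem (hH.mul_mem (hH.absv_mem ha) (hH.absv_mem hb)) (hH.absv_mem ha)) h (absv_le_one z)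

end IsConvexSubalgebra

theorem isConvexSubalgebra_iff (hec : ECyclic α) {H : Set α} :
    IsConvexSubalgebra H ↔
      1 ∈ H ∧ ∀ a ∈ H, ∀ b ∈ H, ∀ z, absv a * absv b * absv a ≤ absv z → z ∈ H := by
  refine ⟨fun hH => ⟨hH.one_mem, fun a ha b hb _ => hH.mem_of_absv_mul_absv_mul_absv_le ha hb⟩,
    fun ⟨h₁, h⟩ => ?_⟩
  have h' : ∀ a ∈ H, ∀ b ∈ H, ∀ z, absv a * absv b ≤ absv z → z ∈ H := fun a ha b hb z hz =>
    h a ha b hb z ((mul_le_of_le_one_right' (absv_le_one a)).trans hz)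
  exact
    { one_mem := h₁
      mul_mem := fun a ha b hb => h a ha b hb _ (absv_mul_absv_mul_absv_le_absv_mul a b)
      sup_mem := fun a ha b hb => h' a ha b hb _ (absv_mul_absv_le_absv_sup a b)
      inf_mem := fun a ha b hb => h' a ha b hb _ (absv_mul_absv_le_absv_inf a b)
      ldiv_mem := fun a ha b hb => h a ha b hb _ (absv_mul_absv_mul_absv_le_absv_ldiv hec a b)
      rdiv_mem := fun a ha b hb => h b hb a ha _ (absv_mul_absv_mul_absv_le_absv_rdiv hec b a)
      convex := fun a ha b hb _ haz hzb =>
        h' a ha b hb _ (absv_mul_absv_le_absv_of_le_of_le haz hzb) }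

theorem isConvexSubalgebra_singleton_one (hec : ECyclic α) : IsConvexSubalgebra ({1} : Set α) := by
  refine (isConvexSubalgebra_iff hec).2 ⟨rfl, ?_⟩
  rintro a rfl b rfl z hz
  simp only [absv_one, mul_one] at hz
  exact eq_one_of_absv_eq_one (le_antisymm (absv_le_one z) hz)

theorem isConvexSubalgebra_sUnion (hec : ECyclic α) {c : Set (Set α)}
    (hc : IsChain (· ⊆ ·) c) (hne : c.Nonempty) (h : ∀ H ∈ c, IsConvexSubalgebra H) :
    IsConvexSubalgebra (⋃₀ c) := by
  obtain ⟨H₀, hH₀⟩ := hne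
  refine (isConvexSubalgebra_iff hec).2 ⟨⟨H₀, hH₀, (h H₀ hH₀).one_mem⟩, ?_⟩
  rintro a ⟨H₁, hH₁, ha⟩ b ⟨H₂, hH₂, hb⟩ z hz
  obtain ⟨H, hH, h₁, h₂⟩ := hc.directedOn H₁ hH₁ H₂ hH₂
  exact ⟨H, hH, (h H hH).mem_of_absv_mul_absv_mul_absv_le (h₁ ha) (h₂ hb) hz⟩

theorem mem_polar_singleton {a y : α} : a ∈ polar {y} ↔ absv a ⊔ absv y = 1 := by
  simp [polar]

theorem mem_polar_singleton_comm {a y : α} : a ∈ polar {y} ↔ y ∈ polar {a} := by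
  rw [mem_polar_singleton, mem_polar_singleton, sup_comm]

theorem isConvexSubalgebra_polar_singleton (hec : ECyclic α) (y : α) :
    IsConvexSubalgebra (polar {y}) := by
  refine (isConvexSubalgebra_iff hec).2 ⟨?_, fun a ha b hb z hz => ?_⟩
  · rw [mem_polar_singleton, absv_one]
    exact sup_eq_left.2 (absv_le_one y)
  · rw [mem_polar_singleton] at ha hb ⊢
    have h := mul_sup_eq_one_of_sup_eq_one (mul_sup_eq_one_of_sup_eq_one ha hb) ha
    exact le_antisymm (sup_le (absv_le_one z) (absv_le_one y)) (h ▸ sup_le_sup_right hz _)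

theorem mem_polar_singleton_of_one_le_sup {t x : α} (ht : t ≤ 1) (h : 1 ≤ absv x ⊔ t) :
    t ∈ polar {x} := by
  have h₁ : t ⊔ absv x = 1 := le_antisymm (sup_le ht (absv_le_one x)) (sup_comm t _ ▸ h)
  refine mem_polar_singleton.2 (le_antisymm (sup_le (absv_le_one t) (absv_le_one x)) ?_)
  calc (1 : α) = (t ⊔ absv x) ^ (2 + 1) := by rw [h₁, one_pow]
    _ ≤ t ^ 2 ⊔ absv x ^ 1 := sup_pow_add_le ht (absv_le_one x) 2 1
    _ ≤ absv t ⊔ absv x := by rw [pow_one]; exact sup_le_sup_right (sq_le_absv ht) _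

/-- For `u ≤ 1` and a convex subalgebra `Q`, this is the convex subalgebra generated by `Q`
and `u`. -/
def convexAdjoin (Q : Set α) (u : α) : Set α :=
  {z | ∃ v ∈ Q, v ≤ 1 ∧ ∃ n : ℕ, (v * u) ^ n ≤ absv z}

theorem subset_convexAdjoin {Q : Set α} (hQ : IsConvexSubalgebra Q) {u : α} (hu : u ≤ 1) :
    Q ⊆ convexAdjoin Q u := fun q hq =>
  ⟨absv q, hQ.absv_mem hq, absv_le_one q, 1, by simpa using mul_le_of_le_one_right' hu⟩

theorem mem_convexAdjoin_self {Q : Set α} (hQ : (1 : α) ∈ Q) {u : α} (hu : u ≤ 1) :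
    u ∈ convexAdjoin Q u :=
  ⟨1, hQ, le_rfl, 2, by simpa using sq_le_absv hu⟩

theorem mem_convexAdjoin_one {u z : α} : z ∈ convexAdjoin {1} u ↔ ∃ n : ℕ, u ^ n ≤ absv z := by
  simp [convexAdjoin]

theorem isConvexSubalgebra_convexAdjoin (hec : ECyclic α) {Q : Set α}
    (hQ : IsConvexSubalgebra Q) (u : α) : IsConvexSubalgebra (convexAdjoin Q u) := by
  refine (isConvexSubalgebra_iff hec).2 ⟨⟨1, hQ.one_mem, le_rfl, 0, by simp [absv_one]⟩, ?_⟩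
  rintro a ⟨v₁, hv₁, hv₁₁, m, hm⟩ b ⟨v₂, hv₂, -, n, hn⟩ z hz
  have hpow {v : α} (hv : v₁ ⊓ v₂ ≤ v) (k : ℕ) : ((v₁ ⊓ v₂) * u) ^ k ≤ (v * u) ^ k :=
    pow_le_pow_left' (mul_le_mul_left hv u) k
  refine ⟨v₁ ⊓ v₂, hQ.inf_mem hv₁ hv₂, inf_le_left.trans hv₁₁, m + n + m, ?_⟩
  rw [pow_add, pow_add]
  exact (mul_le_mul' (mul_le_mul' ((hpow inf_le_left m).trans hm) ((hpow inf_le_right n).trans hn))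
    ((hpow inf_le_left m).trans hm)).trans hz

theorem IsPrimeConvex.mem_or_mem (hec : ECyclic α) {P : Set α} (hP : IsPrimeConvex P)
    {u v : α} (hu : u ≤ 1) (hv : v ≤ 1) (huv : u ⊔ v ∈ P) : u ∈ P ∨ v ∈ P := by
  have hadj := isConvexSubalgebra_convexAdjoin hec (isConvexSubalgebra_singleton_one hec)
  have hself {w : α} (hw : w ≤ 1) := mem_convexAdjoin_self (Set.mem_singleton 1) hw
  have hsub : convexAdjoin {1} u ∩ convexAdjoin {1} v ⊆ P := by
    rintro z ⟨hzu, hzv⟩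
    obtain ⟨m, hm⟩ := mem_convexAdjoin_one.1 hzu
    obtain ⟨n, hn⟩ := mem_convexAdjoin_one.1 hzv
    exact hP.1.mem_of_absv_mem <| hP.1.mem_of_le_of_le_one (hP.1.pow_mem huv (m + n))
      ((sup_pow_add_le hu hv m n).trans (sup_le hm hn)) (absv_le_one z)
  exact (hP.2 _ _ (hadj u) (hadj v) hsub).imp (fun h => h (hself hu)) (fun h => h (hself hv))

theorem isPrimeConvex_of_mem_or_mem {Q : Set α} (hQ : IsConvexSubalgebra Q)
    (h : ∀ u v : α, u ≤ 1 → v ≤ 1 → u ⊔ v ∈ Q → u ∈ Q ∨ v ∈ Q) : IsPrimeConvex Q := by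
  refine ⟨hQ, fun X Y hX hY hXY => ?_⟩
  by_contra! hXY'
  obtain ⟨⟨a, haX, haQ⟩, ⟨b, hbY, hbQ⟩⟩ := And.imp Set.not_subset.1 Set.not_subset.1 hXY'
  have hab : absv a ⊔ absv b ≤ 1 := sup_le (absv_le_one a) (absv_le_one b)
  have habXY : absv a ⊔ absv b ∈ X ∩ Y :=
    ⟨hX.mem_of_le_of_le_one (hX.absv_mem haX) le_sup_left hab,
      hY.mem_of_le_of_le_one (hY.absv_mem hbY) le_sup_right hab⟩
  rcases h _ _ (absv_le_one a) (absv_le_one b) (hXY habXY) with h | h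
  · exact haQ (hQ.mem_of_absv_mem h)
  · exact hbQ (hQ.mem_of_absv_mem h)

theorem IsPrimeConvex.polar_singleton_subset (hec : ECyclic α) {P : Set α}
    (hP : IsPrimeConvex P) {y : α} (hy : y ∉ P) : polar {y} ⊆ P := by
  have hsub : polar {y} ∩ convexAdjoin {1} (absv y) ⊆ P := by
    rintro z ⟨hzy, hz⟩
    obtain ⟨n, hn⟩ := mem_convexAdjoin_one.1 hz
    have hz₁ : (1 : α) ≤ absv z :=
      calc (1 : α) = (absv z ⊔ absv y) ^ (1 + n) := by rw [mem_polar_singleton.1 hzy, one_pow]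
        _ ≤ absv z ^ 1 ⊔ absv y ^ n := sup_pow_add_le (absv_le_one z) (absv_le_one y) 1 n
        _ ≤ absv z := by rw [pow_one]; exact sup_le le_rfl hn
    rw [eq_one_of_absv_eq_one (le_antisymm (absv_le_one z) hz₁)]
    exact hP.1.one_mem
  have hadj := isConvexSubalgebra_convexAdjoin hec (isConvexSubalgebra_singleton_one hec) (absv y)
  refine (hP.2 _ _ (isConvexSubalgebra_polar_singleton hec y) hadj hsub).resolve_right
    fun h => hy ?_
  exact hP.1.mem_of_absv_mem (h (mem_convexAdjoin_self (Set.mem_singleton 1) (absv_le_one y)))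

section Separation

variable {I : Set α}

theorem exists_pow_mem_of_maximal (hec : ECyclic α) (hI : IsLowerSet I) {Q : Set α}
    (hQ : Maximal (fun H => IsConvexSubalgebra H ∧ Disjoint H I) Q) {u : α} (hu : u ≤ 1)
    (huQ : u ∉ Q) : ∃ v ∈ Q, v ≤ 1 ∧ ∃ n : ℕ, (v * u) ^ n ∈ I := by
  by_contra! h
  have hdisj : Disjoint (convexAdjoin Q u) I := by
    refine Set.disjoint_left.2 ?_
    rintro z ⟨v, hv, hv₁, n, hn⟩ hz
    exact h v hv hv₁ n (hI (hn.trans (absv_le_self z)) hz)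
  have hQu := hQ.eq_of_subset ⟨isConvexSubalgebra_convexAdjoin hec hQ.prop.1 u, hdisj⟩
    (subset_convexAdjoin hQ.prop.1 hu)
  exact huQ (hQu ▸ mem_convexAdjoin_self hQ.prop.1.one_mem hu)

theorem isPrimeConvex_of_maximal (hec : ECyclic α) (hI : IsLowerSet I) (hIs : SupClosed I)
    {Q : Set α} (hQ : Maximal (fun H => IsConvexSubalgebra H ∧ Disjoint H I) Q) :
    IsPrimeConvex Q := by
  refine isPrimeConvex_of_mem_or_mem hQ.prop.1 fun u₁ u₂ hu₁ hu₂ hu => ?_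
  by_contra! h
  obtain ⟨v₁, hv₁, hv₁₁, m, hm⟩ := exists_pow_mem_of_maximal hec hI hQ hu₁ h.1
  obtain ⟨v₂, hv₂, -, n, hn⟩ := exists_pow_mem_of_maximal hec hI hQ hu₂ h.2
  have hw₁ : v₁ ⊓ v₂ ≤ 1 := inf_le_left.trans hv₁₁
  have hwQ : (v₁ ⊓ v₂) * (u₁ ⊔ u₂) ∈ Q := hQ.prop.1.mul_mem (hQ.prop.1.inf_mem hv₁ hv₂) hu
  have hwI : ((v₁ ⊓ v₂) * (u₁ ⊔ u₂)) ^ (m + n) ∈ I := by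
    rw [ResiduatedLattice.mul_sup]
    refine hI (sup_pow_add_le (mul_le_one' hw₁ hu₁) (mul_le_one' hw₁ hu₂) m n)
      (hIs (hI ?_ hm) (hI ?_ hn))
    · exact pow_le_pow_left' (mul_le_mul_left inf_le_left _) m
    · exact pow_le_pow_left' (mul_le_mul_left inf_le_right _) n
  exact Set.disjoint_left.1 hQ.prop.2 (hQ.prop.1.pow_mem hwQ _) hwI

/-- A form of the prime ideal theorem: `I` is a lattice ideal of `α`. -/
theorem exists_isPrimeConvex_disjoint (hec : ECyclic α) (hI : IsLowerSet I) (hIs : SupClosed I)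
    (h₁ : (1 : α) ∉ I) : ∃ Q, IsPrimeConvex Q ∧ Disjoint Q I := by
  obtain ⟨Q, -, hQ⟩ := zorn_subset_nonempty {H | IsConvexSubalgebra H ∧ Disjoint H I}
    (fun c hcS hc hne => ⟨⋃₀ c,
      ⟨isConvexSubalgebra_sUnion hec hc hne fun H hH => (hcS hH).1,
        Set.disjoint_sUnion_left.2 fun H hH => (hcS hH).2⟩,
      fun _ => Set.subset_sUnion_of_mem⟩)
    {1} ⟨isConvexSubalgebra_singleton_one hec, Set.disjoint_singleton_left.2 h₁⟩
  exact ⟨Q, isPrimeConvex_of_maximal hec hI hIs hQ, hQ.prop.2⟩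

end Separation

theorem exists_isPrimeConvex_subset_not_mem (hec : ECyclic α) {P : Set α}
    (hP : IsPrimeConvex P) (hP' : P ≠ Set.univ) {x : α} (hx : polar {x} ⊆ P) :
    ∃ Q, IsPrimeConvex Q ∧ Q ⊆ P ∧ x ∉ Q := by
  obtain ⟨y, hy⟩ := (Set.ne_univ_iff_exists_notMem P).1 hP'
  set I : Set α := {s | ∃ t ≤ 1, t ∉ P ∧ s ≤ absv x ⊔ t}
  have hI : IsLowerSet I := fun _ _ hba ⟨t, ht, htP, ha⟩ => ⟨t, ht, htP, hba.trans ha⟩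
  have hIs : SupClosed I := by
    rintro a ⟨t₁, ht₁, ht₁P, ha⟩ b ⟨t₂, ht₂, ht₂P, hb⟩
    refine ⟨t₁ ⊔ t₂, sup_le ht₁ ht₂, fun h => (hP.mem_or_mem hec ht₁ ht₂ h).elim ht₁P ht₂P, ?_⟩
    exact sup_le (ha.trans (sup_le_sup_left le_sup_left _))
      (hb.trans (sup_le_sup_left le_sup_right _))
  have h₁ : (1 : α) ∉ I := fun ⟨t, ht, htP, h⟩ =>
    htP (hx (mem_polar_singleton_of_one_le_sup ht h))
  have habsv {z : α} (hz : z ∉ P) : absv z ∉ P := fun h => hz (hP.1.mem_of_absv_mem h)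
  obtain ⟨Q, hQ, hQI⟩ := exists_isPrimeConvex_disjoint hec hI hIs h₁
  refine ⟨Q, hQ, fun z hzQ => ?_, fun hxQ => ?_⟩
  · by_contra hzP
    exact Set.disjoint_left.1 hQI (hQ.1.absv_mem hzQ)
      ⟨absv z, absv_le_one z, habsv hzP, le_sup_right⟩
  · exact Set.disjoint_left.1 hQI (hQ.1.absv_mem hxQ)
      ⟨absv y, absv_le_one y, habsv hy, le_sup_left⟩

end ResiduatedLattice

/-- characterization of minimal prime convex subalgebras via polars. -/
theorem stmt12 {α : Type u} [ResiduatedLattice α] (hec : ECyclic α)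
    (P : Set α) (hP : IsPrimeConvex P) (hP' : P ≠ Set.univ) :
    List.TFAE [
      IsMinimalPrimeConvex P,
      (∀ x ∈ P, ¬ polar {x} ⊆ P),
      P = ⋃ x ∈ Pᶜ, polar {x}] := by
  tfae_have 1 → 2 := fun ⟨_, _, hmin⟩ x hx hpol => by
    obtain ⟨Q, hQ, hQP, hxQ⟩ := exists_isPrimeConvex_subset_not_mem hec hP hP' hpol
    exact hxQ (hmin Q hQ (fun h => hxQ (h ▸ Set.mem_univ x)) hQP ▸ hx)
  tfae_have 2 → 3 := fun h => by
    refine Set.Subset.antisymm (fun z hz => ?_) (Set.iUnion₂_subset fun y hy =>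
      hP.polar_singleton_subset hec hy)
    obtain ⟨w, hw, hwP⟩ := Set.not_subset.1 (h z hz)
    exact Set.mem_biUnion hwP (mem_polar_singleton_comm.1 hw)
  tfae_have 3 → 1 := fun h => by
    refine ⟨hP, hP', fun Q hQ _ hQP => Set.Subset.antisymm hQP ?_⟩
    rw [h]
    exact Set.iUnion₂_subset fun y hy => hQ.polar_singleton_subset hec fun hyQ => hy (hQP hyQ)
  tfae_finish
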